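/- (Filter step of the evaluation equivalence) Let P be a predicate on values and e a SPARQL expression such that, for every condensed mapping m in the condensed solution sequence s_C, all variables of e lie in the ν-domain of m. If a flat solution sequence s_F represents s_C, then the subsequence of s_F consisting of the flat mappings f with P(eval(e, f)) represents the subsequence of s_C consisting of the condensed mappings m with P(eval(e, m^ν)). -/

import Mathlib

/-- A binding of a variable in a condensed solution mapping: it is bound either
in the value component (`nu`, to a term), the identifier component (`iota`, to a
term identifier), the condensed component (`zeta`, to a pair of a graph-name
identifier and a set of versions), or the unbound-graph component (`psi`).
A condensed solution mapping `Var → Option (Binding Term V)` is thereby exactly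
a quadruple of partial functions with pairwise disjoint domains. -/
inductive Binding (Term V : Type*) where
  | nu (t : Term)
  | iota (n : ℕ)
  | zeta (n : ℕ) (Vs : Set V)
  | psi

/-- The value set of a binding: a singleton `{t}` for a ν-binding, the singleton
`{idtoval n}` for an ι-binding, the set of versioned IRIs `vis (v, idtoval n)`
for `v` in the version set for a ζ-binding, and the set of all versioned IRIs
`vis (v, g)` with `g ∈ NG` for a ψ-binding. -/
def bvals {Term V : Type*} (idtoval : ℕ → Term) (vis : V × Term → Term)
    (NG : Set Term) : Binding Term V → Set Term
  | .nu t => {t}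
  | .iota n => {idtoval n}
  | .zeta n Vs => {t | ∃ v ∈ Vs, t = vis (v, idtoval n)}
  | .psi => {t | ∃ v, ∃ g ∈ NG, t = vis (v, g)}

/-- The value set `vals_m(x)` of a variable under a condensed solution mapping. -/
def valsM {Var Term V : Type*} (idtoval : ℕ → Term) (vis : V × Term → Term)
    (NG : Set Term) (m : Var → Option (Binding Term V)) (x : Var) : Set Term :=
  match m x with
  | none => ∅
  | some b => bvals idtoval vis NG b

/-- The domain of a (condensed or flat) partial mapping. -/
def domM {Var β : Type*} (m : Var → Option β) : Set Var := {x | m x ≠ none}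

/-- The flat expansion `Ξ(m)` of a condensed solution mapping `m`: the set of
partial functions `f : Var ⇀ Term` with the same domain as `m` and with
`f x ∈ vals_m(x)` for every `x` in that domain. -/
def Xi {Var Term V : Type*} (idtoval : ℕ → Term) (vis : V × Term → Term)
    (NG : Set Term) (m : Var → Option (Binding Term V)) :
    Set (Var → Option Term) :=
  {f | (∀ x, m x = none → f x = none) ∧
       (∀ x b, m x = some b → ∃ t, f x = some t ∧ t ∈ bvals idtoval vis NG b)}

/-- Two flat mappings are flat-compatible if they agree on every variable in
the intersection of their domains. -/
def FlatCompat {Var Term : Type*} (f₁ f₂ : Var → Option Term) : Prop :=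
  ∀ x t₁ t₂, f₁ x = some t₁ → f₂ x = some t₂ → t₁ = t₂

/-- Two condensed solution mappings are condensed-compatible if: their ν-components
agree on shared ν-variables, their ι-components agree on shared ι-variables, and
on shared ζ-variables the graph-name identifiers coincide and the version sets
intersect. -/
def CondCompat {Var Term V : Type*} (m₁ m₂ : Var → Option (Binding Term V)) : Prop :=
  (∀ x t₁ t₂, m₁ x = some (.nu t₁) → m₂ x = some (.nu t₂) → t₁ = t₂) ∧
  (∀ x n₁ n₂, m₁ x = some (.iota n₁) → m₂ x = some (.iota n₂) → n₁ = n₂) ∧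
  (∀ x n₁ V₁ n₂ V₂, m₁ x = some (.zeta n₁ V₁) → m₂ x = some (.zeta n₂ V₂) →
    n₁ = n₂ ∧ (V₁ ∩ V₂).Nonempty)

/-- Two bindings are in the same representation component. -/
def SameRep {Term V : Type*} : Binding Term V → Binding Term V → Prop
  | .nu _, .nu _ => True
  | .iota _, .iota _ => True
  | .zeta _ _, .zeta _ _ => True
  | .psi, .psi => True
  | _, _ => False

open Classical in
/-- A flat solution sequence `sF` represents a condensed solution sequence `sC`
if the multiset of flat mappings in `sF` equals the sum over the condensed
mappings `m` in `sC` (with multiplicity) of the multisets underlying `Ξ(m)`;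
equivalently, every flat mapping `f` occurs in `sF` exactly as many times as
there are mappings `m` in `sC` with `f ∈ Ξ(m)`. -/
def Represents {Var Term V : Type*} (idtoval : ℕ → Term) (vis : V × Term → Term)
    (NG : Set Term) (sF : List (Var → Option Term))
    (sC : List (Var → Option (Binding Term V))) : Prop :=
  ∀ f : Var → Option Term,
    (sF : Multiset (Var → Option Term)).count f =
      (sC.map (fun m => if f ∈ Xi idtoval vis NG m then 1 else 0)).sum

/-- SPARQL expressions: terms, variables, and applications of filter-function
symbols (drawn from a type `G`) to lists of expressions. -/
inductive SExpr (Var Term G : Type*) where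
  | term (t : Term)
  | var (x : Var)
  | app (g : G) (args : List (SExpr Var Term G))

/-- Evaluation of a SPARQL expression on a partial mapping `f : Var ⇀ Term`:
a term evaluates to its interpretation, a variable to the interpretation of the
term it is bound to (or `nullV` if unbound), and a filter function `g` to
`interpF g` applied to the values of its arguments. -/
def evalOnTerms {Var Term G Value : Type*} (interpT : Term → Value)
    (interpF : G → List Value → Value) (nullV : Value)
    (f : Var → Option Term) : SExpr Var Term G → Value
  | .term t => interpT t
  | .var x =>
      match f x with
      | some t => interpT t
      | none => nullV
  | .app g args =>
      interpF g (args.attach.map fun e => evalOnTerms interpT interpF nullV f e.1)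
termination_by e => sizeOf e
decreasing_by
  simp only [SExpr.app.sizeOf_spec]
  have := List.sizeOf_lt_of_mem e.2
  omega

/-- The variable `x` occurs in the given SPARQL expression. -/
inductive MemVars {Var Term G : Type*} (x : Var) : SExpr Var Term G → Prop where
  | var : MemVars x (.var x)
  | app {g : G} {args : List (SExpr Var Term G)} {e : SExpr Var Term G} :
      e ∈ args → MemVars x e → MemVars x (.app g args)

/-- The ν-component of a condensed solution mapping, regarded as a partial
function from variables to terms. -/
def nuPart {Var Term V : Type*} (m : Var → Option (Binding Term V)) :
    Var → Option Term :=
  fun x =>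
    match m x with
    | some (.nu t) => some t
    | _ => none

/-!
Every flat mapping in the expansion `Ξ(m)` agrees with `m^ν` on the ν-variables of `m`, hence on
all variables of `e`, so the filter condition takes the same value on `m` and on every member of
`Ξ(m)`: filtering removes whole expansions, which preserves the representation.
-/

theorem evalOnTerms_congr {Var Term G Value : Type*} (interpT : Term → Value)
    (interpF : G → List Value → Value) (nullV : Value) {f f' : Var → Option Term}
    (e : SExpr Var Term G) (h : ∀ x, MemVars x e → f x = f' x) :
    evalOnTerms interpT interpF nullV f e = evalOnTerms interpT interpF nullV f' e := by
  induction e using evalOnTerms.induct (f := f) with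
  | case1 t => simp only [evalOnTerms]
  | case2 x t ht | case3 x ht => simp only [evalOnTerms, ← h x .var]
  | case4 g args ih =>
    simp only [evalOnTerms]
    exact congrArg _ (List.map_congr_left fun a _ => ih a fun x hx => h x (.app a.2 hx))

section

variable {Var Term V : Type*} {idtoval : ℕ → Term} {vis : V × Term → Term} {NG : Set Term}

theorem apply_eq_nuPart_of_mem_Xi {m : Var → Option (Binding Term V)} {f : Var → Option Term}
    (hf : f ∈ Xi idtoval vis NG m) {x : Var} {t : Term} (hx : m x = some (.nu t)) :
    f x = nuPart m x := by
  obtain ⟨t', hfx, rfl⟩ := hf.2 x _ hx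
  simp [nuPart, hx, hfx]

theorem Represents.filter {sF : List (Var → Option Term)}
    {sC : List (Var → Option (Binding Term V))}
    {p : (Var → Option Term) → Prop} {q : (Var → Option (Binding Term V)) → Prop}
    [DecidablePred p] [DecidablePred q]
    (hpq : ∀ m ∈ sC, ∀ f ∈ Xi idtoval vis NG m, (p f ↔ q m))
    (hrep : Represents idtoval vis NG sF sC) :
    Represents idtoval vis NG (sF.filter fun f => decide (p f))
      (sC.filter fun m => decide (q m)) := by
  classical
  intro f
  rw [← Multiset.filter_coe, Multiset.count_filter, hrep f]
  by_cases hf : p f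
  · rw [if_pos hf, ← List.sum_map_filter_add_sum_map_filter_not q, add_eq_left]
    refine List.sum_eq_zero fun n hn => ?_
    obtain ⟨m, hm, rfl⟩ := List.mem_map.mp hn
    rw [List.mem_filter, decide_eq_true_iff] at hm
    exact if_neg fun hfm => hm.2 ((hpq m hm.1 f hfm).1 hf)
  · rw [if_neg hf, eq_comm]
    refine List.sum_eq_zero fun n hn => ?_
    obtain ⟨m, hm, rfl⟩ := List.mem_map.mp hn
    rw [List.mem_filter, decide_eq_true_iff] at hm
    exact if_neg fun hfm => hf ((hpq m hm.1 f hfm).2 hm.2)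

end

theorem represents_filter_general {Var Term V G Value : Type*}
    (idtoval : ℕ → Term) (vis : V × Term → Term) (NG : Set Term)
    (interpT : Term → Value) (interpF : G → List Value → Value) (nullV : Value)
    (P : Value → Prop) [DecidablePred P] (e : SExpr Var Term G)
    (sF : List (Var → Option Term))
    (sC : List (Var → Option (Binding Term V)))
    (hvars : ∀ m ∈ sC, ∀ x : Var, MemVars x e → ∃ t : Term, m x = some (.nu t))
    (hrep : Represents idtoval vis NG sF sC) :
    Represents idtoval vis NG
      (sF.filter fun f => decide (P (evalOnTerms interpT interpF nullV f e)))
      (sC.filter fun m =>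
        decide (P (evalOnTerms interpT interpF nullV (nuPart m) e))) := by
  refine hrep.filter fun m hm f hf => ?_
  rw [evalOnTerms_congr interpT interpF nullV e fun x hx =>
    (hvars m hm x hx).elim fun _ => apply_eq_nuPart_of_mem_Xi hf]

/-- Filter step of the evaluation equivalence: let `P` be a predicate on values
and `e` a SPARQL expression all of whose variables lie in the ν-domain of every
condensed mapping occurring in `sC`. If the flat solution sequence `sF`
represents `sC`, then the subsequence of `sF` of flat mappings `f` with
`P (eval e f)` represents the subsequence of `sC` of condensed mappings `m`
with `P (eval e m^ν)`. -/
theorem represents_filter {Var Term V G Value : Type*}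
    (idtoval : ℕ → Term) (vis : V × Term → Term) (NG : Set Term)
    (hid : Function.Injective idtoval) (hvis : Function.Injective vis)
    (hfin : ∀ b : Binding Term V, (bvals idtoval vis NG b).Finite)
    (interpT : Term → Value) (interpF : G → List Value → Value) (nullV : Value)
    (P : Value → Prop) [DecidablePred P] (e : SExpr Var Term G)
    (sF : List (Var → Option Term))
    (sC : List (Var → Option (Binding Term V)))
    (hvars : ∀ m ∈ sC, ∀ x : Var, MemVars x e → ∃ t : Term, m x = some (.nu t))
    (hrep : Represents idtoval vis NG sF sC) :
    Represents idtoval vis NG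
      (sF.filter fun f => decide (P (evalOnTerms interpT interpF nullV f e)))
      (sC.filter fun m =>
        decide (P (evalOnTerms interpT interpF nullV (nuPart m) e))) :=
  represents_filter_general idtoval vis NG interpT interpF nullV P e sF sC hvars hrep
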